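/- Let d and C be positive integers, let P be a nonempty compact subset of ℝ^d with diameter D = sup { ‖u − v‖ : u, v ∈ P }, let 𝒳 be any set of data points, and for each class i ∈ {1,…,C} let l^i : ℝ^d × 𝒳 → ℝ be such that for every x ∈ 𝒳 the function θ ↦ l^i(θ, x) is differentiable with β-Lipschitz gradient, for some β > 0, and the gradients are uniformly bounded on P: ‖∇_θ l^i(p, x)‖ ≤ B for all p ∈ P, x ∈ 𝒳, i ∈ {1,…,C}. For each x ∈ 𝒳 let s_1(x), …, s_C(x) ≥ 0 with Σ_{i=1}^{C} s_i(x) = 1. Then for every x ∈ 𝒳, every m ∈ P, and every choice of class prompts p_1, …, p_C ∈ P, Σ_{i=1}^{C} s_i(x) · l^i(m, x) ≤ Σ_{i=1}^{C} s_i(x) · ( l^i(p_i, x) + (β/2)·‖m − p_i‖² ) + D·B. Moreover, for each fixed x, the right-hand side, viewed as a function of m over ℝ^d, is minimized at m = Σ_{i=1}^{C} s_i(x) · p_i. -/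

import Mathlib

/-!
Each loss obeys the descent lemma `lⁱ(m) ≤ lⁱ(pᵢ) + ⟪∇lⁱ(pᵢ), m - pᵢ⟫ + β/2 ‖m - pᵢ‖²`, and the
linear term is at most `B · D` by Cauchy–Schwarz, since `m` and `pᵢ` both lie in `P`; averaging
with the scores `sᵢ(x)` gives the bound. The right-hand side depends on `m` only through
`∑ sᵢ ‖m - pᵢ‖²`, which equals `‖m - m̄‖² + ∑ sᵢ ‖m̄ - pᵢ‖²` for the weighted mean `m̄ = ∑ sᵢ pᵢ`.
-/

open Finset InnerProductSpace
open scoped Gradient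

section InnerProductSpace

variable {E : Type*} [NormedAddCommGroup E] [InnerProductSpace ℝ E]

theorem sum_mul_norm_sub_sq_eq {ι : Type*} (s : Finset ι) {w : ι → ℝ} (hw : ∑ i ∈ s, w i = 1)
    (p : ι → E) (y : E) :
    ∑ i ∈ s, w i * ‖y - p i‖ ^ 2 =
      ‖y - ∑ j ∈ s, w j • p j‖ ^ 2 + ∑ i ∈ s, w i * ‖(∑ j ∈ s, w j • p j) - p i‖ ^ 2 := by
  set c := ∑ j ∈ s, w j • p j
  -- the cross terms cancel because `c` is the `w`-weighted mean of the `p i`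
  have hcross : ∑ i ∈ s, w i * ⟪y - c, c - p i⟫_ℝ = 0 := by
    simp_rw [← real_inner_smul_right, smul_sub]
    rw [← inner_sum, sum_sub_distrib, ← sum_smul, hw, one_smul, sub_self, inner_zero_right]
  have hexpand : ∀ i, ‖y - p i‖ ^ 2 = ‖y - c‖ ^ 2 + 2 * ⟪y - c, c - p i⟫_ℝ + ‖c - p i‖ ^ 2 := by
    intro i
    rw [← norm_add_sq_real, sub_add_sub_cancel]
  simp_rw [hexpand, mul_add, sum_add_distrib, ← sum_mul, hw, mul_left_comm _ (2 : ℝ), ← mul_sum,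
    hcross]
  ring

theorem sum_mul_norm_sub_sq_le {ι : Type*} (s : Finset ι) {w : ι → ℝ} (hw : ∑ i ∈ s, w i = 1)
    (p : ι → E) (y : E) :
    ∑ i ∈ s, w i * ‖(∑ j ∈ s, w j • p j) - p i‖ ^ 2 ≤ ∑ i ∈ s, w i * ‖y - p i‖ ^ 2 := by
  rw [sum_mul_norm_sub_sq_eq s hw p y]
  exact le_add_of_nonneg_left (sq_nonneg _)

variable [CompleteSpace E]

theorem HasGradientAt.hasDerivAt_comp_add_smul {f : E → ℝ} {g p v : E} {t : ℝ}
    (hf : HasGradientAt f g (p + t • v)) :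
    HasDerivAt (fun t : ℝ => f (p + t • v)) ⟪g, v⟫_ℝ t := by
  have hline : HasDerivAt (fun t : ℝ => p + t • v) v t := by
    simpa using ((hasDerivAt_id t).smul_const v).const_add p
  have := hf.hasFDerivAt.comp_hasDerivAt t hline
  simp only [toDual_apply_apply] at this
  exact this

theorem le_add_inner_gradient_add_half_mul_sq {f : E → ℝ} {β : ℝ} (hf : Differentiable ℝ f)
    (hlip : ∀ x y, ‖∇ f x - ∇ f y‖ ≤ β * ‖x - y‖) (p m : E) :
    f m ≤ f p + ⟪∇ f p, m - p⟫_ℝ + β / 2 * ‖m - p‖ ^ 2 := by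
  set v := m - p
  -- `ψ' t = ⟪∇f (p + t v) - ∇f p, v⟫ - β t ‖v‖²`, which the Lipschitz bound makes nonpositive
  let ψ : ℝ → ℝ := fun t => f (p + t • v) - t * ⟪∇ f p, v⟫_ℝ - β / 2 * ‖v‖ ^ 2 * t ^ 2
  have hψ : ∀ t, HasDerivAt ψ (⟪∇ f (p + t • v), v⟫_ℝ - ⟪∇ f p, v⟫_ℝ - β * ‖v‖ ^ 2 * t) t := by
    intro t
    have hquad := (hasDerivAt_pow 2 t).const_mul (β / 2 * ‖v‖ ^ 2)
    refine (((hf _).hasGradientAt.hasDerivAt_comp_add_smul.sub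
      ((hasDerivAt_id t).mul_const ⟪∇ f p, v⟫_ℝ)).sub hquad).congr_deriv ?_
    push_cast
    ring
  have hψ_anti : AntitoneOn ψ (Set.Ici 0) := by
    refine antitoneOn_of_hasDerivWithinAt_nonpos (convex_Ici 0)
      (fun t _ => (hψ t).continuousAt.continuousWithinAt)
      (fun t _ => (hψ t).hasDerivWithinAt) fun t ht => ?_
    rw [interior_Ici, Set.mem_Ioi] at ht
    have hinner : ⟪∇ f (p + t • v) - ∇ f p, v⟫_ℝ ≤ β * ‖v‖ ^ 2 * t :=
      calc ⟪∇ f (p + t • v) - ∇ f p, v⟫_ℝ ≤ ‖∇ f (p + t • v) - ∇ f p‖ * ‖v‖ :=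
            real_inner_le_norm _ _
        _ ≤ β * ‖(p + t • v) - p‖ * ‖v‖ := by gcongr; exact hlip _ _
        _ = β * ‖v‖ ^ 2 * t := by
            rw [add_sub_cancel_left, norm_smul, Real.norm_of_nonneg ht.le]; ring
    rw [inner_sub_left] at hinner
    linarith
  have hψ10 := hψ_anti Set.self_mem_Ici (Set.mem_Ici.2 zero_le_one) zero_le_one
  simp only [ψ, v, one_smul, add_sub_cancel, one_mul, one_pow, mul_one, zero_smul, add_zero,
    zero_mul, sub_zero, ne_eq, OfNat.ofNat_ne_zero, not_false_eq_true, zero_pow, mul_zero] at hψ10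
  linarith

end InnerProductSpace

theorem ccmp_data_dependent_scores_general
    (d C : ℕ)
    (P : Set (EuclideanSpace ℝ (Fin d))) (hP : IsCompact P)
    (D : ℝ) (hD : D = Metric.diam P)
    (𝒳 : Type*)
    (l : Fin C → EuclideanSpace ℝ (Fin d) → 𝒳 → ℝ)
    (β : ℝ) (hβ : 0 < β)
    (hdiff : ∀ i x, Differentiable ℝ (fun θ => l i θ x))
    (hlip : ∀ i x θ₁ θ₂,
      ‖gradient (fun θ => l i θ x) θ₁ - gradient (fun θ => l i θ x) θ₂‖ ≤ β * ‖θ₁ - θ₂‖)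
    (B : ℝ)
    (hgradbd : ∀ i x, ∀ q ∈ P, ‖gradient (fun θ => l i θ x) q‖ ≤ B)
    (s : 𝒳 → Fin C → ℝ) (hs : ∀ x i, 0 ≤ s x i) (hssum : ∀ x, ∑ i, s x i = 1) :
    ∀ (x : 𝒳), ∀ m ∈ P, ∀ p : Fin C → EuclideanSpace ℝ (Fin d), (∀ i, p i ∈ P) →
      (∑ i, s x i * l i m x ≤
        (∑ i, s x i * (l i (p i) x + β / 2 * ‖m - p i‖ ^ 2)) + D * B) ∧
      (∀ m' : EuclideanSpace ℝ (Fin d),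
        ∑ i, s x i * (l i (p i) x + β / 2 * ‖(∑ j, s x j • p j) - p i‖ ^ 2) ≤
          ∑ i, s x i * (l i (p i) x + β / 2 * ‖m' - p i‖ ^ 2)) := by
  intro x m hm p hp
  have hdist : ∀ i, ‖m - p i‖ ≤ D := fun i => by
    rw [hD, ← dist_eq_norm]
    exact Metric.dist_le_diam_of_mem hP.isBounded hm (hp i)
  have hclass : ∀ i, l i m x ≤ l i (p i) x + β / 2 * ‖m - p i‖ ^ 2 + D * B := by
    intro i
    have hgrad := hgradbd i x (p i) (hp i)
    have hlinear : ⟪∇ (fun θ => l i θ x) (p i), m - p i⟫_ℝ ≤ D * B :=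
      calc _ ≤ ‖∇ (fun θ => l i θ x) (p i)‖ * ‖m - p i‖ := real_inner_le_norm _ _
        _ ≤ B * D := mul_le_mul hgrad (hdist i) (norm_nonneg _) ((norm_nonneg _).trans hgrad)
        _ = D * B := mul_comm _ _
    linarith [le_add_inner_gradient_add_half_mul_sq (hdiff i x) (hlip i x) (p i) m]
  have hsplit : ∀ y : EuclideanSpace ℝ (Fin d),
      ∑ i, s x i * (l i (p i) x + β / 2 * ‖y - p i‖ ^ 2) =
        ∑ i, s x i * l i (p i) x + β / 2 * ∑ i, s x i * ‖y - p i‖ ^ 2 := fun y => by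
    rw [mul_sum, ← sum_add_distrib]
    exact sum_congr rfl fun i _ => by ring
  refine ⟨?_, fun m' => ?_⟩
  · calc ∑ i, s x i * l i m x
        ≤ ∑ i, s x i * (l i (p i) x + β / 2 * ‖m - p i‖ ^ 2 + D * B) :=
          sum_le_sum fun i _ => mul_le_mul_of_nonneg_left (hclass i) (hs x i)
      _ = _ := by simp only [mul_add, sum_add_distrib, ← sum_mul, hssum x, one_mul]
  · rw [hsplit, hsplit]
    gcongr _ + _ * ?_
    exact sum_mul_norm_sub_sq_le _ (hssum x) p m'

/-- pointwise quadratic upper bound with data-dependent soft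
mixing scores, and optimality of the per-sample CCMP
`m = ∑ i, s i x • p i` for the right-hand side. -/
theorem ccmp_data_dependent_scores
    (d C : ℕ) (hd : 0 < d) (hC : 0 < C)
    (P : Set (EuclideanSpace ℝ (Fin d))) (hPne : P.Nonempty) (hP : IsCompact P)
    (D : ℝ) (hD : D = Metric.diam P)
    (𝒳 : Type*)
    (l : Fin C → EuclideanSpace ℝ (Fin d) → 𝒳 → ℝ)
    (β : ℝ) (hβ : 0 < β)
    (hdiff : ∀ i x, Differentiable ℝ (fun θ => l i θ x))
    (hlip : ∀ i x θ₁ θ₂,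
      ‖gradient (fun θ => l i θ x) θ₁ - gradient (fun θ => l i θ x) θ₂‖ ≤ β * ‖θ₁ - θ₂‖)
    (B : ℝ)
    (hgradbd : ∀ i x, ∀ q ∈ P, ‖gradient (fun θ => l i θ x) q‖ ≤ B)
    (s : 𝒳 → Fin C → ℝ) (hs : ∀ x i, 0 ≤ s x i) (hssum : ∀ x, ∑ i, s x i = 1) :
    ∀ (x : 𝒳), ∀ m ∈ P, ∀ p : Fin C → EuclideanSpace ℝ (Fin d), (∀ i, p i ∈ P) →
      (∑ i, s x i * l i m x ≤
        (∑ i, s x i * (l i (p i) x + β / 2 * ‖m - p i‖ ^ 2)) + D * B) ∧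
      (∀ m' : EuclideanSpace ℝ (Fin d),
        ∑ i, s x i * (l i (p i) x + β / 2 * ‖(∑ j, s x j • p j) - p i‖ ^ 2) ≤
          ∑ i, s x i * (l i (p i) x + β / 2 * ‖m' - p i‖ ^ 2)) :=
  ccmp_data_dependent_scores_general d C P hP D hD 𝒳 l β hβ hdiff hlip B hgradbd s hs hssum
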